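/- Suppose dim_ℂ S = 4 and dim_ℂ R = 4. Let Q = s ⊗ r with s ≠ 0 and r ≠ 0 (a minimal supercharge), and set K = {r' ∈ R : ω(r, r') = 0}. Then the kernel of the linear map β(Q, −) : S ⊗ R → ⋀²S equals the sum of the two subspaces S ⊗ K and (ℂ·s) ⊗ R (the ranges of the canonical maps S ⊗ K → S ⊗ R and (ℂ·s) ⊗ R → S ⊗ R), and this kernel has dimension 13. (This is the linear-algebraic content of the paper's remark that at a holomorphic supercharge the tangent space to the projectivized nilpotence variety of the N=(2,0) algebra is 12-dimensional, larger than at nonminimal points where the corresponding kernel is 11-dimensional, so that the rank-one locus is the singular locus.) -/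

import Mathlib

/-!
Writing `Q = s ⊗ r`, the map `β (Q, -)` factors as the contraction `S ⊗ R → S`,
`s' ⊗ r' ↦ ω(r, r') s'`, followed by `s ∧ -`. Since `r ≠ 0` and `ω` is nondegenerate,
`ω(r, -)` is onto `ℂ`, so the contraction is surjective with kernel `S ⊗ K`, and the preimage
of `ker (s ∧ -) = ℂ·s` is `S ⊗ K + (ℂ·s) ⊗ R`. The rank of `s ∧ -` is `4 - 1 = 3`, so the
kernel has dimension `16 - 3 = 13`.
-/

open TensorProduct ExteriorAlgebra

/-- The wedge `s ∧ t` as an element of the second exterior power `⋀[ℂ]^2 S`. -/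
noncomputable def wedge {S : Type} [AddCommGroup S] [Module ℂ S] (s t : S) : ⋀[ℂ]^2 S :=
  ⟨ι ℂ s * ι ℂ t, by
    show _ ∈ LinearMap.range (ι ℂ : S →ₗ[ℂ] ExteriorAlgebra ℂ S) ^ 2
    rw [pow_two]
    exact Submodule.mul_mem_mul (LinearMap.mem_range_self _ s) (LinearMap.mem_range_self _ t)⟩

section Contraction

variable {R M N : Type*} [CommRing R] [AddCommGroup M] [Module R M] [AddCommGroup N] [Module R N]

noncomputable def contract (φ : N →ₗ[R] R) : M ⊗[R] N →ₗ[R] M :=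
  TensorProduct.rid R M ∘ₗ φ.lTensor M

@[simp]
theorem contract_tmul (φ : N →ₗ[R] R) (m : M) (n : N) : contract φ (m ⊗ₜ n) = φ n • m := by
  simp [contract]

theorem contract_comp_rTensor {P : Type*} [AddCommGroup P] [Module R P] (φ : N →ₗ[R] R)
    (f : P →ₗ[R] M) : contract φ ∘ₗ f.rTensor N = f ∘ₗ contract φ :=
  TensorProduct.ext' fun p n => by simp

variable {φ : N →ₗ[R] R}

theorem contract_surjective (hφ : Function.Surjective φ) :
    Function.Surjective (contract (M := M) φ) :=
  (TensorProduct.rid R M).surjective.comp (LinearMap.lTensor_surjective M hφ)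

theorem ker_contract (hφ : Function.Surjective φ) : LinearMap.ker (contract (M := M) φ) =
    LinearMap.range ((LinearMap.ker φ).subtype.lTensor M) := by
  rw [contract, LinearEquiv.ker_comp,
    (lTensor_exact M φ.exact_subtype_ker_map hφ).linearMap_ker_eq]

theorem map_contract_range_rTensor (hφ : Function.Surjective φ) (p : Submodule R M) :
    (LinearMap.range (p.subtype.rTensor N)).map (contract φ) = p := by
  rw [← LinearMap.range_comp, contract_comp_rTensor,
    LinearMap.range_comp_of_range_eq_top _ (LinearMap.range_eq_top.2 (contract_surjective hφ)),
    Submodule.range_subtype]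

theorem comap_contract (hφ : Function.Surjective φ) (p : Submodule R M) :
    p.comap (contract φ) =
      LinearMap.range ((LinearMap.ker φ).subtype.lTensor M) ⊔
        LinearMap.range (p.subtype.rTensor N) := by
  rw [← map_contract_range_rTensor hφ p, Submodule.comap_map_eq, ker_contract hφ,
    map_contract_range_rTensor hφ p, sup_comm]

end Contraction

section Wedge

variable {S : Type} [AddCommGroup S] [Module ℂ S]

theorem wedge_eq_ιMulti (s t : S) : wedge s t = exteriorPower.ιMulti ℂ 2 ![s, t] := by
  ext
  simp [wedge, ιMulti_apply]

theorem wedge_ne_zero {s t : S} (h : LinearIndependent ℂ ![s, t]) : wedge s t ≠ 0 := by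
  have hfam := exteriorPower.ιMulti_family_linearIndependent_field (n := 2) h
  -- the family is indexed by the 2-subsets of `Fin 2`; evaluate it at the only one, `{0, 1}`
  simpa [exteriorPower.ιMulti_family, wedge_eq_ιMulti] using
    hfam.ne_zero (Set.powersetCard.ofFinEmbEquiv (RelEmbedding.refl (· ≤ ·)))

theorem wedge_self_smul (s : S) (c : ℂ) : wedge s (c • s) = 0 := by
  ext
  simp [wedge]

theorem wedge_eq_zero_iff {s t : S} (hs : s ≠ 0) : wedge s t = 0 ↔ t ∈ Submodule.span ℂ {s} := by
  refine ⟨fun h => ?_, fun h => ?_⟩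
  · by_contra ht
    refine wedge_ne_zero ((LinearIndependent.pair_iff' hs).2 fun a ha => ht ?_) h
    exact Submodule.mem_span_singleton.2 ⟨a, ha⟩
  · obtain ⟨c, rfl⟩ := Submodule.mem_span_singleton.1 h
    exact wedge_self_smul s c

noncomputable def wedgeLeft (s : S) : S →ₗ[ℂ] ⋀[ℂ]^2 S :=
  (LinearMap.mulLeft ℂ (ι ℂ s) ∘ₗ ι ℂ).codRestrict _ fun t => (wedge s t).2

@[simp]
theorem wedgeLeft_apply (s t : S) : wedgeLeft s t = wedge s t := rfl

theorem ker_wedgeLeft {s : S} (hs : s ≠ 0) :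
    LinearMap.ker (wedgeLeft s) = Submodule.span ℂ {s} := by
  ext t
  rw [LinearMap.mem_ker, wedgeLeft_apply, wedge_eq_zero_iff hs]

theorem finrank_range_wedgeLeft_add_one [FiniteDimensional ℂ S] {s : S} (hs : s ≠ 0) :
    Module.finrank ℂ (LinearMap.range (wedgeLeft s)) + 1 = Module.finrank ℂ S := by
  rw [← finrank_span_singleton (K := ℂ) hs, ← ker_wedgeLeft hs,
    LinearMap.finrank_range_add_finrank_ker]

theorem apply_tmul_eq_wedgeLeft_comp_contract {R : Type} [AddCommGroup R] [Module ℂ R]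
    {ω : R →ₗ[ℂ] R →ₗ[ℂ] ℂ} {β : (S ⊗[ℂ] R) →ₗ[ℂ] (S ⊗[ℂ] R) →ₗ[ℂ] ⋀[ℂ]^2 S}
    (hβ : ∀ (s s' : S) (r r' : R), β (s ⊗ₜ[ℂ] r) (s' ⊗ₜ[ℂ] r') = ω r r' • wedge s s')
    (s : S) (r : R) : β (s ⊗ₜ[ℂ] r) = wedgeLeft s ∘ₗ contract (ω r) :=
  TensorProduct.ext' fun s' r' => by simp [hβ]

end Wedge

theorem minimal_supercharge_kernel_is_thirteen_dimensional_general
    {S R : Type} [AddCommGroup S] [Module ℂ S] [FiniteDimensional ℂ S]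
    [AddCommGroup R] [Module ℂ R] [FiniteDimensional ℂ R]
    (hS : Module.finrank ℂ S = 4) (hR : Module.finrank ℂ R = 4)
    (ω : R →ₗ[ℂ] R →ₗ[ℂ] ℂ)
    (hnd : ∀ r : R, (∀ r' : R, ω r r' = 0) → r = 0)
    (β : (S ⊗[ℂ] R) →ₗ[ℂ] (S ⊗[ℂ] R) →ₗ[ℂ] ⋀[ℂ]^2 S)
    (hβ : ∀ (s s' : S) (r r' : R),
      β (s ⊗ₜ[ℂ] r) (s' ⊗ₜ[ℂ] r') = ω r r' • wedge s s')
    (s : S) (r : R) (hs : s ≠ 0) (hr : r ≠ 0) :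
    LinearMap.ker (β (s ⊗ₜ[ℂ] r)) =
      LinearMap.range
          (TensorProduct.map (LinearMap.id : S →ₗ[ℂ] S) (LinearMap.ker (ω r)).subtype) ⊔
        LinearMap.range
          (TensorProduct.map (Submodule.span ℂ {s}).subtype (LinearMap.id : R →ₗ[ℂ] R)) ∧
    Module.finrank ℂ ↥(LinearMap.ker (β (s ⊗ₜ[ℂ] r))) = 13 := by
  have hωr : Function.Surjective (ω r) :=
    (ω r).surjective_or_eq_zero.resolve_right fun h => hr (hnd r fun r' => by simp [h])
  have hβQ := apply_tmul_eq_wedgeLeft_comp_contract hβ s r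
  have hker : LinearMap.ker (β (s ⊗ₜ[ℂ] r)) = (Submodule.span ℂ {s}).comap (contract (ω r)) := by
    rw [hβQ, LinearMap.ker_comp, ker_wedgeLeft hs]
  refine ⟨hker.trans (comap_contract hωr _), ?_⟩
  have hrange : LinearMap.range (β (s ⊗ₜ[ℂ] r)) = LinearMap.range (wedgeLeft s) := by
    rw [hβQ, LinearMap.range_comp_of_range_eq_top _
      (LinearMap.range_eq_top.2 (contract_surjective hωr))]
  have hrank_nullity := LinearMap.finrank_range_add_finrank_ker (β (s ⊗ₜ[ℂ] r))
  rw [hrange, Module.finrank_tensorProduct, hS, hR] at hrank_nullity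
  have hrank_wedge := finrank_range_wedgeLeft_add_one hs
  omega

/-- Suppose `dim_ℂ S = 4` and `dim_ℂ R = 4`, and let `Q = s ⊗ r` be a minimal supercharge
(`s ≠ 0`, `r ≠ 0`).  With `K = {r' : ω r r' = 0}`, the kernel of `β (Q, -) : S ⊗ R → ⋀²S`
equals `S ⊗ K + (ℂ·s) ⊗ R` and is 13-dimensional: the tangent space to the nilpotence variety
of the `N=(2,0)` algebra is larger at a minimal supercharge than at a nonminimal one (where
the corresponding kernel is 11-dimensional), so the rank-one locus is the singular locus. -/
theorem minimal_supercharge_kernel_is_thirteen_dimensional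
    {S R : Type} [AddCommGroup S] [Module ℂ S] [FiniteDimensional ℂ S]
    [AddCommGroup R] [Module ℂ R] [FiniteDimensional ℂ R]
    (hS : Module.finrank ℂ S = 4) (hR : Module.finrank ℂ R = 4)
    (ω : R →ₗ[ℂ] R →ₗ[ℂ] ℂ)
    (halt : ∀ r : R, ω r r = 0)
    (hnd : ∀ r : R, (∀ r' : R, ω r r' = 0) → r = 0)
    (β : (S ⊗[ℂ] R) →ₗ[ℂ] (S ⊗[ℂ] R) →ₗ[ℂ] ⋀[ℂ]^2 S)
    (hβ : ∀ (s s' : S) (r r' : R),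
      β (s ⊗ₜ[ℂ] r) (s' ⊗ₜ[ℂ] r') = ω r r' • wedge s s')
    (s : S) (r : R) (hs : s ≠ 0) (hr : r ≠ 0) :
    LinearMap.ker (β (s ⊗ₜ[ℂ] r)) =
      LinearMap.range
          (TensorProduct.map (LinearMap.id : S →ₗ[ℂ] S) (LinearMap.ker (ω r)).subtype) ⊔
        LinearMap.range
          (TensorProduct.map (Submodule.span ℂ {s}).subtype (LinearMap.id : R →ₗ[ℂ] R)) ∧
    Module.finrank ℂ ↥(LinearMap.ker (β (s ⊗ₜ[ℂ] r))) = 13 :=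
  minimal_supercharge_kernel_is_thirteen_dimensional_general hS hR ω hnd β hβ s r hs hr
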